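/- Let X be the first return time to state 0 of the age Markov chain started at state 0. Then E[X] = 1 + ∑_{i=0}^{m'-2} ∏_{j=0}^{i}(1-p_j) + (1/p_{m'})·∏_{j=0}^{m'-1}(1-p_j); in particular E[X] equals the reciprocal of the stationary probability π_0 of state 0. -/

import Mathlib

open MeasureTheory ProbabilityTheory Finset
open scoped ProbabilityTheory ENNReal

noncomputable section

/-- The age Markov chain on `{0, 1, …, m'}` started at state `0`, driven by a
sequence `U` of random numbers: at time `t`, if the chain is in state `j`, it
moves to `0` when `U t < p j` and otherwise moves to `min (j+1) m'`. -/
def ageChain {Ω : Type*} (m' : ℕ) (p : ℕ → ℝ) (U : ℕ → Ω → ℝ) : ℕ → Ω → ℕ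
  | 0, _ => 0
  | t + 1, ω =>
      if U t ω < p (ageChain m' p U t ω) then 0
      else min (ageChain m' p U t ω + 1) m'

/-- The first return time to state `0` of the age chain started at `0`. -/
def firstReturn {Ω : Type*} (m' : ℕ) (p : ℕ → ℝ) (U : ℕ → Ω → ℝ) (ω : Ω) : ℕ :=
  sInf {t | 1 ≤ t ∧ ageChain m' p U t ω = 0}

section Aux

variable {Ω : Type*} {m' : ℕ} {p : ℕ → ℝ} {U : ℕ → Ω → ℝ}

lemma ageChain_succ (t : ℕ) (ω : Ω) :
    ageChain m' p U (t + 1) ω =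
      if U t ω < p (ageChain m' p U t ω) then 0
      else min (ageChain m' p U t ω + 1) m' := rfl

lemma ageChain_eq_min (ω : Ω) (t : ℕ)
    (h : ∀ s < t, p (min s m') ≤ U s ω) : ageChain m' p U t ω = min t m' := by
  induction t with
  | zero => simp [ageChain]
  | succ t ih =>
    have ht : ageChain m' p U t ω = min t m' :=
      ih fun s hs => h s (hs.trans (Nat.lt_succ_self t))
    rw [ageChain_succ, ht, if_neg (not_lt.2 (h t (Nat.lt_succ_self t)))]
    omega

lemma good_iff (hm' : 1 ≤ m') (ω : Ω) (t : ℕ) :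
    (∀ s < t, p (min s m') ≤ U s ω) ↔
      ∀ s, 1 ≤ s → s ≤ t → ageChain m' p U s ω ≠ 0 := by
  induction t with
  | zero => exact ⟨fun _ s h1 h2 => by omega, fun _ s hs => absurd hs (Nat.not_lt_zero s)⟩
  | succ t ih =>
    constructor
    · intro h s h1 h2
      rw [ageChain_eq_min ω s fun u hu => h u (lt_of_lt_of_le hu h2)]
      omega
    · intro h s hs
      have hgt : ∀ s < t, p (min s m') ≤ U s ω :=
        ih.2 fun u h1 h2 => h u h1 (h2.trans (Nat.le_succ t))
      rcases Nat.lt_succ_iff_lt_or_eq.1 hs with hs | hs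
      · exact hgt s hs
      · subst hs
        by_contra hlt
        push_neg at hlt
        have hage : ageChain m' p U s ω = min s m' := ageChain_eq_min ω s hgt
        have : ageChain m' p U (s + 1) ω = 0 := by
          rw [ageChain_succ, hage, if_pos hlt]
        exact h (s + 1) (Nat.le_add_left 1 s) le_rfl this

lemma measurable_ageChain [MeasurableSpace Ω] (hU : ∀ t, Measurable (U t)) (t : ℕ) :
    Measurable (ageChain m' p U t) := by
  induction t with
  | zero => exact measurable_const
  | succ t ih =>
    have hset : MeasurableSet {ω | U t ω < p (ageChain m' p U t ω)} :=
      measurableSet_lt (hU t) ((measurable_from_top (f := p)).comp ih)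
    exact Measurable.ite hset measurable_const
      ((measurable_from_top (f := fun j => min (j + 1) m')).comp ih)

end Aux

/-- The mean of the first return time `X` to state `0` is
`E[X] = 1 + ∑_{i=0}^{m'-2} ∏_{j=0}^{i} (1-p_j) + (1/p_{m'}) ∏_{j=0}^{m'-1} (1-p_j)`,
i.e. the reciprocal of the stationary probability
`π₀ = 1 / (1 + ∑_{i=0}^{m'-2} ∏_{j=0}^{i} (1-p_j) + (1/p_{m'}) ∏_{j=0}^{m'-1} (1-p_j))`
of state `0`. -/
theorem firstReturn_expectation
    {Ω : Type*} [MeasureSpace Ω] [IsProbabilityMeasure (ℙ : Measure Ω)]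
    (m' : ℕ) (hm' : 1 ≤ m') (p : ℕ → ℝ)
    (hp : ∀ j ≤ m', p j ∈ Set.Icc (0 : ℝ) 1) (hpm' : 0 < p m')
    (U : ℕ → Ω → ℝ) (hUmeas : ∀ t, Measurable (U t))
    (hUindep : iIndepFun U ℙ)
    (hUunif : ∀ t, Measure.map (U t) ℙ = volume.restrict (Set.Icc (0 : ℝ) 1)) :
    (∫ ω, (firstReturn m' p U ω : ℝ) ∂ℙ
      = 1 + (∑ i ∈ Finset.range (m' - 1), ∏ j ∈ Finset.range (i + 1), (1 - p j))
        + (1 / p m') * ∏ j ∈ Finset.range m', (1 - p j)) ∧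
    (∫ ω, (firstReturn m' p U ω : ℝ) ∂ℙ
      = (1 / (1 + (∑ i ∈ Finset.range (m' - 1), ∏ j ∈ Finset.range (i + 1), (1 - p j))
        + (1 / p m') * ∏ j ∈ Finset.range m', (1 - p j)))⁻¹) := by
  classical
  set R : ℝ := 1 + (∑ i ∈ Finset.range (m' - 1), ∏ j ∈ Finset.range (i + 1), (1 - p j))
        + (1 / p m') * ∏ j ∈ Finset.range m', (1 - p j) with hR
  have hnn : ∀ j ≤ m', (0:ℝ) ≤ 1 - p j := fun j hj => by have := (hp j hj).2; linarith
  have hS1 : (0:ℝ) ≤ ∑ i ∈ Finset.range (m' - 1), ∏ j ∈ Finset.range (i + 1), (1 - p j) := by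
    refine Finset.sum_nonneg fun i hi => Finset.prod_nonneg fun j hj => hnn j ?_
    simp only [Finset.mem_range] at hi hj; omega
  have hProd : (0:ℝ) ≤ ∏ j ∈ Finset.range m', (1 - p j) :=
    Finset.prod_nonneg fun j hj => hnn j (le_of_lt (Finset.mem_range.1 hj))
  have hlast : (0:ℝ) ≤ (1 / p m') * ∏ j ∈ Finset.range m', (1 - p j) :=
    mul_nonneg (by positivity) hProd
  have hRpos : (0:ℝ) < R := by rw [hR]; linarith
  set T : Ω → ℕ := firstReturn m' p U with hT
  set G : ℕ → Set Ω := fun t => {ω | ∀ s < t, p (min s m') ≤ U s ω} with hG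
  have hGset : ∀ t, G t = ⋂ s ∈ Finset.range t, (U s) ⁻¹' Set.Ici (p (min s m')) := by
    intro t; ext ω
    simp [hG, Set.mem_iInter]
  have hGmeas : ∀ t, MeasurableSet (G t) := by
    intro t; rw [hGset]
    exact MeasurableSet.biInter (Finset.range t).countable_toSet
      fun s _ => (hUmeas s) measurableSet_Ici
  have hsingle : ∀ (s : ℕ) (c : ℝ), c ∈ Set.Icc (0:ℝ) 1 →
      ℙ (U s ⁻¹' Set.Ici c) = ENNReal.ofReal (1 - c) := by
    intro s c hc
    rw [← Measure.map_apply (hUmeas s) measurableSet_Ici, hUunif s,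
      Measure.restrict_apply measurableSet_Ici]
    have hset : Set.Ici c ∩ Set.Icc (0:ℝ) 1 = Set.Icc c 1 := by
      ext x; simp only [Set.mem_inter_iff, Set.mem_Ici, Set.mem_Icc]
      constructor
      · rintro ⟨h1, _, h3⟩; exact ⟨h1, h3⟩
      · rintro ⟨h1, h2⟩; exact ⟨h1, hc.1.trans h1, h2⟩
    rw [hset, Real.volume_Icc]
  have hGmeasure : ∀ t, ℙ (G t) = ∏ s ∈ Finset.range t, ENNReal.ofReal (1 - p (min s m')) := by
    intro t
    rw [hGset, hUindep.meas_biInter (fun s _ => ⟨Set.Ici (p (min s m')), measurableSet_Ici, rfl⟩)]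
    exact Finset.prod_congr rfl fun s _ => hsingle s _ (hp _ (min_le_right s m'))
  set A : Set Ω := ⋂ t, G t with hAdef
  have hAmeas : MeasurableSet A := MeasurableSet.iInter hGmeas
  have hq1 : ENNReal.ofReal (1 - p m') < 1 := by
    rw [ENNReal.ofReal_lt_one]; linarith
  have hA : ℙ A = 0 := by
    refine le_antisymm ?_ zero_le
    have hbound : ∀ k, ℙ A ≤ ENNReal.ofReal (1 - p m') ^ k := by
      intro k
      calc ℙ A ≤ ℙ (G (m' + k)) := measure_mono (Set.iInter_subset _ _)
        _ = ∏ s ∈ Finset.range (m' + k), ENNReal.ofReal (1 - p (min s m')) := hGmeasure _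
        _ = (∏ s ∈ Finset.range m', ENNReal.ofReal (1 - p (min s m'))) *
            ∏ i ∈ Finset.range k, ENNReal.ofReal (1 - p (min (m' + i) m')) :=
              Finset.prod_range_add _ _ _
        _ ≤ 1 * ENNReal.ofReal (1 - p m') ^ k := by
            refine mul_le_mul' (Finset.prod_le_one (fun _ _ => zero_le) fun s _ => ?_) ?_
            · exact ENNReal.ofReal_le_one.2 (by have := (hp _ (min_le_right s m')).1; linarith)
            · refine le_of_eq ?_
              rw [Finset.prod_congr rfl fun i _ => by
                rw [min_eq_right (Nat.le_add_right m' i)], Finset.prod_const,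
                Finset.card_range]
        _ = ENNReal.ofReal (1 - p m') ^ k := one_mul _
    exact ge_of_tendsto' (ENNReal.tendsto_pow_atTop_nhds_zero_of_lt_one hq1) hbound
  have hAiff : ∀ ω, ω ∉ A ↔ ∃ s, 1 ≤ s ∧ ageChain m' p U s ω = 0 := by
    intro ω
    constructor
    · intro h
      by_contra hc
      push_neg at hc
      refine h (Set.mem_iInter.2 fun t => ?_)
      exact (good_iff hm' ω t).2 fun s h1 _ => hc s h1
    · rintro ⟨s, h1, h2⟩ hA'
      exact (good_iff hm' ω s).1 (Set.mem_iInter.1 hA' s) s h1 le_rfl h2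
  have hlt_iff : ∀ t, {ω | t < T ω} = G t \ A := by
    intro t; ext ω
    simp only [Set.mem_setOf_eq, Set.mem_diff]
    constructor
    · intro h
      have hne : {u | 1 ≤ u ∧ ageChain m' p U u ω = 0}.Nonempty := by
        by_contra hc
        rw [Set.not_nonempty_iff_eq_empty] at hc
        have h0 : T ω = 0 := by
          rw [hT]; simp only [firstReturn, hc, Nat.sInf_empty]
        omega
      have hmem := Nat.sInf_mem hne
      have hmemT : 1 ≤ T ω ∧ ageChain m' p U (T ω) ω = 0 := hmem
      constructor
      · refine (good_iff hm' ω t).2 fun s h1 h2 h0 => ?_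
        have : T ω ≤ s := Nat.sInf_le ⟨h1, h0⟩
        omega
      · intro hA'
        exact (good_iff hm' ω (T ω)).1 (Set.mem_iInter.1 hA' (T ω)) (T ω)
          hmemT.1 le_rfl hmemT.2
    · rintro ⟨hGt, hA'⟩
      obtain ⟨s, h1, h2⟩ := (hAiff ω).1 hA'
      have hne : {u | 1 ≤ u ∧ ageChain m' p U u ω = 0}.Nonempty := ⟨s, h1, h2⟩
      have hmem := Nat.sInf_mem hne
      have hmemT : 1 ≤ T ω ∧ ageChain m' p U (T ω) ω = 0 := hmem
      by_contra hc
      push_neg at hc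
      exact (good_iff hm' ω t).1 hGt (T ω) hmemT.1 hc hmemT.2
  have hltmeas : ∀ t, MeasurableSet {ω | t < T ω} := fun t => by
    rw [hlt_iff]; exact (hGmeas t).diff hAmeas
  have hmeas_lt : ∀ t, ℙ {ω | t < T ω}
      = ∏ s ∈ Finset.range t, ENNReal.ofReal (1 - p (min s m')) := by
    intro t; rw [hlt_iff t, measure_diff_null hA, hGmeasure]
  -- measurability of T
  have hTmeas : Measurable T := by
    refine measurable_to_countable' fun n => ?_
    match n with
    | 0 =>
      have hset : T ⁻¹' {0} = A := by
        ext ω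
        simp only [Set.mem_preimage, Set.mem_singleton_iff]
        constructor
        · intro h
          by_contra hA'
          obtain ⟨s, h1, h2⟩ := (hAiff ω).1 hA'
          have hmem := Nat.sInf_mem (⟨s, h1, h2⟩ :
            {u | 1 ≤ u ∧ ageChain m' p U u ω = 0}.Nonempty)
          have hmemT : 1 ≤ T ω ∧ ageChain m' p U (T ω) ω = 0 := hmem
          omega
        · intro hA'
          have hempty : {u | 1 ≤ u ∧ ageChain m' p U u ω = 0} = ∅ := by
            rw [Set.eq_empty_iff_forall_notMem]
            rintro u ⟨h1, h2⟩
            exact ((hAiff ω).2 ⟨u, h1, h2⟩) hA'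
          rw [hT]; simp only [firstReturn, hempty, Nat.sInf_empty]
      rw [hset]; exact hAmeas
    | (n+1) =>
      have hset : T ⁻¹' {n+1} = {ω | ageChain m' p U (n+1) ω = 0} ∩ G n := by
        ext ω
        simp only [Set.mem_preimage, Set.mem_singleton_iff, Set.mem_inter_iff,
          Set.mem_setOf_eq]
        constructor
        · intro h
          have hne : {u | 1 ≤ u ∧ ageChain m' p U u ω = 0}.Nonempty := by
            by_contra hc
            rw [Set.not_nonempty_iff_eq_empty] at hc
            have h0 : T ω = 0 := by
              rw [hT]; simp only [firstReturn, hc, Nat.sInf_empty]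
            omega
          have hmem := Nat.sInf_mem hne
          have hmemT : 1 ≤ T ω ∧ ageChain m' p U (T ω) ω = 0 := hmem
          constructor
          · rw [← h]; exact hmemT.2
          · refine (good_iff hm' ω n).2 fun s h1 h2 h0 => ?_
            have : T ω ≤ s := Nat.sInf_le ⟨h1, h0⟩
            omega
        · rintro ⟨h0, hGn⟩
          have hne : {u | 1 ≤ u ∧ ageChain m' p U u ω = 0}.Nonempty :=
            ⟨n + 1, by omega, h0⟩
          have hmem := Nat.sInf_mem hne
          have hmemT : 1 ≤ T ω ∧ ageChain m' p U (T ω) ω = 0 := hmem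
          have hle : T ω ≤ n + 1 := Nat.sInf_le ⟨by omega, h0⟩
          by_contra hc
          have hlt : T ω ≤ n := by omega
          exact (good_iff hm' ω n).1 hGn (T ω) hmemT.1 hlt hmemT.2
      rw [hset]
      exact ((measurable_ageChain hUmeas (n+1)) (measurableSet_singleton 0)).inter (hGmeas n)
  -- lintegral as a sum of tail probabilities
  have hindic : ∀ ω, (T ω : ℝ≥0∞)
      = ∑' t : ℕ, Set.indicator {ω' | t < T ω'} (fun _ => (1:ℝ≥0∞)) ω := by
    intro ω
    have h1 : ∀ t, Set.indicator {ω' | t < T ω'} (fun _ => (1:ℝ≥0∞)) ω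
        = if t < T ω then 1 else 0 := fun t => by
      simp [Set.indicator_apply]
    rw [tsum_congr h1, tsum_eq_sum (s := Finset.range (T ω))
      (fun b hb => by rw [if_neg (by simpa using hb)])]
    rw [Finset.sum_congr rfl fun b hb => if_pos (Finset.mem_range.1 hb)]
    simp
  have hlint : ∫⁻ ω, (T ω : ℝ≥0∞) ∂ℙ = ∑' t, ℙ {ω | t < T ω} := by
    calc ∫⁻ ω, (T ω : ℝ≥0∞) ∂ℙ
        = ∫⁻ ω, ∑' t : ℕ, Set.indicator {ω' | t < T ω'} (fun _ => (1:ℝ≥0∞)) ω ∂ℙ :=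
          lintegral_congr hindic
      _ = ∑' t, ∫⁻ ω, Set.indicator {ω' | t < T ω'} (fun _ => (1:ℝ≥0∞)) ω ∂ℙ :=
          lintegral_tsum fun t => (measurable_const.indicator (hltmeas t)).aemeasurable
      _ = ∑' t, ℙ {ω | t < T ω} := by
          exact tsum_congr fun t => lintegral_indicator_one (hltmeas t)
  -- compute the sum
  have hsum : ∑' t : ℕ, ∏ s ∈ Finset.range t, ENNReal.ofReal (1 - p (min s m'))
      = ENNReal.ofReal R := by
    set f : ℕ → ℝ≥0∞ := fun t => ∏ s ∈ Finset.range t, ENNReal.ofReal (1 - p (min s m'))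
      with hf
    have hsplit : (∑ t ∈ Finset.range m', f t) + ∑' k, f (k + m') = ∑' t, f t :=
      Summable.sum_add_tsum_nat_add' (f := f) (k := m') ENNReal.summable
    have hfin : ∀ t ≤ m', f t = ENNReal.ofReal (∏ j ∈ Finset.range t, (1 - p j)) := by
      intro t ht
      rw [hf]
      rw [ENNReal.ofReal_prod_of_nonneg
        (fun j hj => hnn j (le_trans (le_of_lt (Finset.mem_range.1 hj)) ht))]
      exact Finset.prod_congr rfl fun s hs => by
        have := Finset.mem_range.1 hs
        rw [min_eq_left (by omega)]
    have h1 : ∑ t ∈ Finset.range m', f t =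
        ENNReal.ofReal (1 + ∑ i ∈ Finset.range (m' - 1),
          ∏ j ∈ Finset.range (i + 1), (1 - p j)) := by
      obtain ⟨n, hn⟩ : ∃ n, m' = n + 1 := ⟨m' - 1, by omega⟩
      rw [hn, Finset.sum_range_succ']
      have hz : f 0 = 1 := by simp [hf]
      have hrest : ∀ i ∈ Finset.range n, f (i + 1)
          = ENNReal.ofReal (∏ j ∈ Finset.range (i + 1), (1 - p j)) := fun i hi =>
        hfin (i + 1) (by have := Finset.mem_range.1 hi; omega)
      rw [Finset.sum_congr rfl hrest, hz,
        ← ENNReal.ofReal_sum_of_nonneg (fun i hi => Finset.prod_nonneg fun j hj => hnn j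
          (by have := Finset.mem_range.1 hi; have := Finset.mem_range.1 hj; omega))]
      rw [← ENNReal.ofReal_one, ← ENNReal.ofReal_add (Finset.sum_nonneg fun i hi =>
        Finset.prod_nonneg fun j hj => hnn j
          (by have := Finset.mem_range.1 hi; have := Finset.mem_range.1 hj; omega))
        zero_le_one]
      congr 1
      rw [Nat.add_sub_cancel]
      ring
    have htail : ∀ k, f (k + m')
        = ENNReal.ofReal (∏ j ∈ Finset.range m', (1 - p j))
          * ENNReal.ofReal (1 - p m') ^ k := by
      intro k
      rw [hf]
      show ∏ s ∈ Finset.range (k + m'), ENNReal.ofReal (1 - p (min s m')) = _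
      rw [add_comm k m', Finset.prod_range_add]
      congr 1
      · rw [← hfin m' le_rfl, hf]
      · rw [Finset.prod_congr rfl fun i _ => by
          rw [min_eq_right (Nat.le_add_right m' i)], Finset.prod_const, Finset.card_range]
    have h2 : ∑' k, f (k + m')
        = ENNReal.ofReal ((1 / p m') * ∏ j ∈ Finset.range m', (1 - p j)) := by
      rw [tsum_congr htail, ENNReal.tsum_mul_left, ENNReal.tsum_geometric]
      have hone : (1 : ℝ≥0∞) - ENNReal.ofReal (1 - p m') = ENNReal.ofReal (p m') := by
        rw [← ENNReal.ofReal_one, ← ENNReal.ofReal_sub 1 (hnn m' le_rfl)]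
        norm_num
      rw [hone, ← ENNReal.ofReal_inv_of_pos hpm', ← ENNReal.ofReal_mul hProd]
      congr 1
      rw [one_div]
      ring
    rw [← hsplit, h1, h2, ← ENNReal.ofReal_add (by linarith) hlast]
  -- conclude
  have hTr : Measurable fun ω => (T ω : ℝ) :=
    (measurable_from_top (f := fun n : ℕ => (n : ℝ))).comp hTmeas
  have key : ∫ ω, (T ω : ℝ) ∂ℙ = R := by
    rw [integral_eq_lintegral_of_nonneg_ae (ae_of_all _ fun ω => Nat.cast_nonneg _)
      hTr.aestronglyMeasurable]
    rw [lintegral_congr fun ω => (ENNReal.ofReal_natCast (T ω) :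
      ENNReal.ofReal ((T ω : ℝ)) = (T ω : ℝ≥0∞))]
    rw [hlint, tsum_congr hmeas_lt, hsum, ENNReal.toReal_ofReal hRpos.le]
  refine ⟨key, ?_⟩
  rw [key, one_div, inv_inv]
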